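/- arXiv:1011.0359 — 2 statements merged into one kernel-verified Lean document; each statement's English description precedes it below -/
import Mathlib

section
/- Let f be a transcendental entire function and let R > 0 be such that M(r, f) > r for all r ≥ R. If A_R(f) is a spider's web and K is a connected component of the complement of A(f), then f(K) is also a connected component of the complement of A(f). -/
/-!
For `v ∉ A(f)` let `H_L(v)` be the component of the complement of `A_R^{-L}(f)` containing `v`.
These holes avoid `A_R(f)`, so the spider's web makes them bounded, and the open mapping theorem
gives `f(H_{L+1}(v)) = H_L(f v)`. The component `K` of `A(f)ᶜ` containing `v` contains the
continuum `T = ⋂_L closure H_L(v)`: if some `p ∈ T` lay in `A_R^{-ℓ}(f)`, choose a web domain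
`G ∋ v` and a time `s` at which the orbit of `v` lags far behind `M^n(R, f)`. Then for a suitable
`t > s` the hole `H_0(f^t v) = f^t(H_t(v))` is trapped in `f^s(G)`, which bounds `|f^t(p)|` by
`M^{s+c}(R, f)`, below the rate `M^{t-ℓ}(R, f)` forced on `p`. Thus `f(K)` lies in the component
`C` of `f v`; conversely each `w ∈ C` lies in every `H_L(f v) = f(H_{L+1}(v))`, and compactness
gives a preimage of `w` in `T ⊆ K`.
-/

open Set Metric Topology Function Bornology

/-- The maximum modulus `M(r, f)` of `f` on the circle `|z| = r`. -/
noncomputable def maxMod (f : ℂ → ℂ) (r : ℝ) : ℝ :=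
  sSup ((fun z => ‖f z‖) '' Metric.sphere (0 : ℂ) r)

/-- `f` is a transcendental entire function: holomorphic on all of `ℂ` and not a polynomial. -/
def TranscEntire (f : ℂ → ℂ) : Prop :=
  Differentiable ℂ f ∧ ¬ ∃ p : Polynomial ℂ, ∀ z, f z = p.eval z

/-- The fast escaping set `A(f)` (with parameter `R`). -/
def fastEscaping (f : ℂ → ℂ) (R : ℝ) : Set ℂ :=
  {z | ∃ L : ℕ, ∀ n : ℕ, (maxMod f)^[n] R ≤ ‖f^[n + L] z‖}

/-- The `L`-th level `A_R^L(f)` of the fast escaping set. -/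
def levelSet (f : ℂ → ℂ) (R : ℝ) (L : ℤ) : Set ℂ :=
  {z | ∀ n : ℕ, 0 ≤ (n : ℤ) + L →
    (maxMod f)^[((n : ℤ) + L).toNat] R ≤ ‖f^[n] z‖}

/-- `E ⊆ ℂ` is an (infinite) spider's web. -/
def SpidersWeb (E : Set ℂ) : Prop :=
  IsConnected E ∧ ∃ G : ℕ → Set ℂ,
    (∀ n, IsOpen (G n) ∧ IsConnected (G n) ∧ Bornology.IsBounded (G n) ∧
      SimplyConnectedSpace (G n) ∧ G n ⊆ G (n + 1) ∧ frontier (G n) ⊆ E) ∧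
    (⋃ n, G n) = Set.univ

/-- `K` is a connected component of the set `S`. -/
def IsCompOf {X : Type*} [TopologicalSpace X] (K S : Set X) : Prop :=
  ∃ z ∈ S, K = connectedComponentIn S z

/-- The `n`-th fundamental hole for `A_R(f)`: the component of the complement of
`A_R^n(f)` containing `0`. -/
noncomputable def fundHole (f : ℂ → ℂ) (R : ℝ) (n : ℤ) : Set ℂ :=
  connectedComponentIn (levelSet f R n)ᶜ 0

/-- The `n`-th fundamental loop for `A_R(f)`. -/
noncomputable def fundLoop (f : ℂ → ℂ) (R : ℝ) (n : ℤ) : Set ℂ :=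
  frontier (fundHole f R n)

open Filter

section MaxMod

variable {f : ℂ → ℂ}

lemma bddAbove_norm_image_sphere (hf : Continuous f) (r : ℝ) :
    BddAbove ((fun z => ‖f z‖) '' sphere (0 : ℂ) r) :=
  ((isCompact_sphere 0 r).image hf.norm).bddAbove

lemma norm_le_maxMod (hf : Continuous f) (w : ℂ) : ‖f w‖ ≤ maxMod f ‖w‖ :=
  le_csSup (bddAbove_norm_image_sphere hf _) ⟨w, by simp, rfl⟩

lemma maxMod_mono (hf : Differentiable ℂ f) {r r' : ℝ} (hr : 0 ≤ r) (h : r ≤ r') :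
    maxMod f r ≤ maxMod f r' := by
  obtain rfl | hlt := h.eq_or_lt
  · rfl
  have hr' : r' ≠ 0 := (hr.trans_lt hlt).ne'
  refine csSup_le ⟨_, (r : ℂ), by simp [abs_of_nonneg hr], rfl⟩ ?_
  rintro _ ⟨w, hw, rfl⟩
  refine Complex.norm_le_of_forall_mem_frontier_norm_le (isBounded_ball (x := 0) (r := r'))
    hf.diffContOnCl (fun z hz => ?_) ?_
  · rw [frontier_ball 0 hr'] at hz
    exact le_csSup (bddAbove_norm_image_sphere hf.continuous _) ⟨z, hz, rfl⟩
  · rw [closure_ball 0 hr']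
    exact closedBall_subset_closedBall h (sphere_subset_closedBall hw)

lemma norm_iterate_le_iterate_maxMod (hf : Differentiable ℂ f) {u : ℂ} {r : ℝ} (h : ‖u‖ ≤ r)
    (k : ℕ) : ‖f^[k] u‖ ≤ (maxMod f)^[k] r := by
  induction k with
  | zero => simpa
  | succ k ih =>
    rw [iterate_succ_apply', iterate_succ_apply']
    exact (norm_le_maxMod hf.continuous _).trans (maxMod_mono hf (norm_nonneg _) ih)

variable {R : ℝ}

lemma le_iterate_maxMod (hM : ∀ r ≥ R, r < maxMod f r) (k : ℕ) : R ≤ (maxMod f)^[k] R := by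
  induction k with
  | zero => rfl
  | succ k ih =>
    rw [iterate_succ_apply']
    exact ih.trans (hM _ ih).le

lemma strictMono_iterate_maxMod (hM : ∀ r ≥ R, r < maxMod f r) :
    StrictMono fun k => (maxMod f)^[k] R :=
  strictMono_nat_of_lt_succ fun k => by
    simpa only [iterate_succ_apply'] using hM _ (le_iterate_maxMod hM k)

lemma exists_lt_iterate_maxMod (hf : Continuous f) (hR : 0 < R) (hM : ∀ r ≥ R, r < maxMod f r)
    (c : ℝ) : ∃ k, c < (maxMod f)^[k] R := by
  by_contra! hb
  set a : ℕ → ℝ := fun k => (maxMod f)^[k] R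
  have hbdd : BddAbove (range a) := ⟨c, forall_mem_range.2 hb⟩
  set l := ⨆ k, a k
  have hal : ∀ k, a k ≤ l := le_ciSup hbdd
  have hRl : R ≤ l := hal 0
  have hl : 0 < l := hR.trans_le hRl
  have htend : Tendsto a atTop (𝓝 l) :=
    tendsto_atTop_ciSup (strictMono_iterate_maxMod hM).monotone hbdd
  -- if the orbit of `R` stayed bounded, continuity of `f` would force `M(l, f) ≤ l`
  refine (hM l hRl).not_ge (csSup_le ⟨_, (l : ℂ), by simp [hl.le], rfl⟩ ?_)
  rintro _ ⟨w, hw, rfl⟩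
  have hw' : ‖w‖ = l := by simpa using hw
  have hlim : Tendsto (fun k => ((a k / l : ℝ) : ℂ) * w) atTop (𝓝 w) := by
    have : Tendsto (fun k => a k / l) atTop (𝓝 1) := by simpa [hl.ne'] using htend.div_const l
    simpa using ((Complex.continuous_ofReal.tendsto 1).comp this).mul_const w
  refine le_of_tendsto' ((hf.norm.tendsto w).comp hlim) fun k => ?_
  have hak : 0 ≤ a k / l := div_nonneg (hR.le.trans (le_iterate_maxMod hM k)) hl.le
  calc ‖f (((a k / l : ℝ) : ℂ) * w)‖ ≤ maxMod f (a k) := by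
        convert norm_le_maxMod hf _ using 2
        rw [norm_mul, Complex.norm_real, hw', Real.norm_of_nonneg hak, div_mul_cancel₀ _ hl.ne']
    _ = a (k + 1) := (iterate_succ_apply' _ _ _).symm
    _ ≤ l := hal _

end MaxMod

section LevelSets

variable {f : ℂ → ℂ} {R : ℝ}

lemma isClosed_levelSet (hf : Continuous f) (m : ℤ) : IsClosed (levelSet f R m) := by
  simp only [levelSet, ofPred_forall]
  exact isClosed_iInter fun n => isClosed_iInter fun _ =>
    isClosed_le continuous_const (hf.iterate n).norm

lemma mem_levelSet_neg_iff {z : ℂ} {L : ℕ} :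
    z ∈ levelSet f R (-L) ↔ ∀ k : ℕ, (maxMod f)^[k] R ≤ ‖f^[k + L] z‖ := by
  refine ⟨fun h k => by simpa using h (k + L) (by omega), fun h n hn => ?_⟩
  obtain ⟨k, rfl⟩ : ∃ k, n = k + L := ⟨n - L, by omega⟩
  simpa using h k

lemma fastEscaping_eq_iUnion_levelSet :
    fastEscaping f R = ⋃ L : ℕ, levelSet f R (-L) := by
  ext z
  simp [fastEscaping, mem_levelSet_neg_iff]

lemma levelSet_neg_subset_fastEscaping (L : ℕ) : levelSet f R (-L) ⊆ fastEscaping f R :=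
  fastEscaping_eq_iUnion_levelSet (f := f) ▸ subset_iUnion (fun L : ℕ => levelSet f R (-L)) L

lemma apply_mem_levelSet_neg_iff {z : ℂ} {L : ℕ} :
    f z ∈ levelSet f R (-L) ↔ z ∈ levelSet f R (-(L + 1 : ℕ)) := by
  simp only [mem_levelSet_neg_iff, ← iterate_succ_apply, Nat.succ_eq_add_one, add_assoc]

lemma levelSet_neg_mono (hM : ∀ r ≥ R, r < maxMod f r) :
    Monotone fun L : ℕ => levelSet f R (-L) := by
  intro L L' h z hz
  obtain ⟨j, rfl⟩ := Nat.exists_eq_add_of_le h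
  simp only [mem_levelSet_neg_iff] at hz ⊢
  intro k
  calc (maxMod f)^[k] R ≤ (maxMod f)^[k + j] R :=
        (strictMono_iterate_maxMod hM).monotone (Nat.le_add_right k j)
    _ ≤ ‖f^[k + (L + j)] z‖ := by simpa [add_assoc, add_comm j] using hz (k + j)

lemma mapsTo_iterate_levelSet_zero (hM : ∀ r ≥ R, r < maxMod f r) (s : ℕ) :
    MapsTo f^[s] (levelSet f R 0) (levelSet f R 0 ∩ (ball 0 ((maxMod f)^[s] R))ᶜ) := by
  intro z hz
  have hz' := (mem_levelSet_neg_iff (L := 0)).1 (by simpa using hz)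
  refine ⟨?_, by simpa using hz' s⟩
  simpa using (mem_levelSet_neg_iff (L := 0)).2 fun k => by
    simpa [← iterate_add_apply] using
      ((strictMono_iterate_maxMod hM).monotone (Nat.le_add_right k s)).trans (hz' (k + s))

lemma mapsTo_compl_fastEscaping : MapsTo f (fastEscaping f R)ᶜ (fastEscaping f R)ᶜ :=
  fun _ hz ⟨L, hL⟩ => hz ⟨L + 1, fun n => by simpa [← add_assoc] using hL n⟩

end LevelSets

section Topology

variable {X Y : Type*} [TopologicalSpace X] [TopologicalSpace Y]

lemma IsPreconnected.subset_of_disjoint_frontier {s u : Set X} (hs : IsPreconnected s)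
    (hu : IsOpen u) (hsu : (s ∩ u).Nonempty) (hd : Disjoint s (frontier u)) : s ⊆ u :=
  hs.subset_of_closure_inter_subset hu hsu fun x ⟨hxc, hxs⟩ => by
    by_contra hxu
    exact hd.notMem_of_mem_left hxs ⟨hxc, by rwa [hu.interior_eq]⟩

lemma frontier_connectedComponentIn_subset_compl [LocallyConnectedSpace X] {U : Set X}
    (hU : IsOpen U) (x : X) : frontier (connectedComponentIn U x) ⊆ Uᶜ := by
  intro y hy hyU
  obtain ⟨z, hzy, hzx⟩ := mem_closure_iff.1 hy.1 _ (hU.connectedComponentIn (x := y))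
    (mem_connectedComponentIn hyU)
  have hxy : connectedComponentIn U x = connectedComponentIn U y :=
    (connectedComponentIn_eq hzx).trans (connectedComponentIn_eq hzy).symm
  exact hy.2 (by rw [hU.connectedComponentIn.interior_eq, hxy]; exact mem_connectedComponentIn hyU)

lemma frontier_image_subset_image_frontier [T2Space Y] {f : X → Y} (hf : Continuous f)
    (hfo : IsOpenMap f) {s : Set X} (hs : IsCompact (closure s)) :
    frontier (f '' s) ⊆ f '' frontier s := by
  rintro y ⟨hyc, hyi⟩
  rw [← image_closure_of_isCompact hs hf.continuousOn] at hyc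
  obtain ⟨x, hx, rfl⟩ := hyc
  exact ⟨x, ⟨hx, fun hxi => hyi (hfo.image_interior_subset s ⟨x, hxi, rfl⟩)⟩, rfl⟩

lemma IsOpenMap.iterate {f : X → X} (hf : IsOpenMap f) (n : ℕ) : IsOpenMap f^[n] := by
  induction n with
  | zero => exact IsOpenMap.id
  | succ n ih => exact ih.comp hf

lemma isPreconnected_iInter_of_isCompact [T2Space X] {C : ℕ → Set X} (hC : Antitone C)
    (hcpt : ∀ n, IsCompact (C n)) (hconn : ∀ n, IsPreconnected (C n)) :
    IsPreconnected (⋂ n, C n) := by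
  have hT : IsClosed (⋂ n, C n) := isClosed_iInter fun n => (hcpt n).isClosed
  have hTc : IsCompact (⋂ n, C n) := (hcpt 0).of_isClosed_subset hT (iInter_subset _ 0)
  rw [isPreconnected_iff_subset_of_fully_disjoint_closed hT]
  intro u v hu hv huv hd
  obtain ⟨U, V, hU, hV, huU, hvV, hUV⟩ := SeparatedNhds.of_isCompact_isCompact
    (hTc.inter_right hu) (hTc.inter_right hv) (hd.mono inter_subset_right inter_subset_right)
  have hUV' : ∀ x ∈ ⋂ n, C n, x ∈ U ∨ x ∈ V := fun x hx =>
    (huv hx).imp (fun h => huU ⟨hx, h⟩) (fun h => hvV ⟨hx, h⟩)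
  obtain ⟨n, hn⟩ : ∃ n, C n ⊆ U ∪ V := exists_subset_nhds_of_isCompact hC.directed_ge hcpt
    fun x hx => (hU.union hV).mem_nhds (hUV' x hx)
  have hTn : ⋂ n, C n ⊆ C n := iInter_subset _ n
  rcases (hconn n).subset_or_subset hU hV hUV hn with h | h
  · exact Or.inl fun x hx => (huv hx).resolve_right fun hxv =>
      hUV.notMem_of_mem_left (h (hTn hx)) (hvV ⟨hx, hxv⟩)
  · exact Or.inr fun x hx => (huv hx).resolve_left fun hxu =>
      hUV.notMem_of_mem_left (huU ⟨hx, hxu⟩) (h (hTn hx))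

end Topology

lemma TranscEntire.isOpenMap {f : ℂ → ℂ} (hf : TranscEntire f) : IsOpenMap f :=
  ((Complex.analyticOnNhd_univ_iff_differentiable.2 hf.1).is_constant_or_isOpenMap).resolve_left
    fun ⟨w, hw⟩ => hf.2 ⟨Polynomial.C w, fun z => by simp [hw]⟩

lemma SpidersWeb.exists_isOpen_isBounded_mem {E : Set ℂ} (hE : SpidersWeb E) (v : ℂ) :
    ∃ G, IsOpen G ∧ IsBounded G ∧ frontier G ⊆ E ∧ v ∈ G := by
  obtain ⟨-, G, hG, hGU⟩ := hE
  obtain ⟨n, hn⟩ := mem_iUnion.1 (hGU ▸ mem_univ v)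
  exact ⟨G n, (hG n).1, (hG n).2.2.1, (hG n).2.2.2.2.2, hn⟩

lemma SpidersWeb.isBounded_of_isPreconnected {E S : Set ℂ} (hE : SpidersWeb E)
    (hS : IsPreconnected S) (hSE : Disjoint S E) : IsBounded S := by
  obtain rfl | ⟨v, hv⟩ := S.eq_empty_or_nonempty
  · exact isBounded_empty
  obtain ⟨G, hG, hGb, hGE, hvG⟩ := hE.exists_isOpen_isBounded_mem v
  exact hGb.subset (hS.subset_of_disjoint_frontier hG ⟨v, hv, hvG⟩ (hSE.mono_right hGE))

def levelHole (f : ℂ → ℂ) (R : ℝ) (v : ℂ) (L : ℕ) : Set ℂ :=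
  connectedComponentIn (levelSet f R (-L))ᶜ v

section LevelHoles

variable {f : ℂ → ℂ} {R : ℝ} {v : ℂ}

lemma isPreconnected_levelHole (L : ℕ) : IsPreconnected (levelHole f R v L) :=
  isPreconnected_connectedComponentIn

lemma levelHole_subset_compl (L : ℕ) : levelHole f R v L ⊆ (levelSet f R (-L))ᶜ :=
  connectedComponentIn_subset _ _

lemma isOpen_levelHole (hf : Continuous f) (L : ℕ) : IsOpen (levelHole f R v L) :=
  (isClosed_levelSet hf _).isOpen_compl.connectedComponentIn

lemma mem_levelHole (hv : v ∉ fastEscaping f R) (L : ℕ) : v ∈ levelHole f R v L :=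
  mem_connectedComponentIn fun h => hv (levelSet_neg_subset_fastEscaping L h)

lemma levelHole_antitone (hM : ∀ r ≥ R, r < maxMod f r) :
    Antitone (levelHole f R v) :=
  fun _ _ h => connectedComponentIn_mono v (compl_subset_compl.2 (levelSet_neg_mono hM h))

lemma frontier_levelHole_subset (hf : Continuous f) (L : ℕ) :
    frontier (levelHole f R v L) ⊆ levelSet f R (-L) := by
  have h := frontier_connectedComponentIn_subset_compl
    (isClosed_levelSet (R := R) hf (-L)).isOpen_compl v
  rwa [compl_compl] at h

lemma isBounded_levelHole (hM : ∀ r ≥ R, r < maxMod f r) (hweb : SpidersWeb (levelSet f R 0))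
    (L : ℕ) : IsBounded (levelHole f R v L) := by
  refine hweb.isBounded_of_isPreconnected (isPreconnected_levelHole L) ?_
  refine disjoint_compl_left.mono_left ((levelHole_subset_compl L).trans ?_)
  simpa using compl_subset_compl.2 (levelSet_neg_mono hM (Nat.zero_le L))

lemma connectedComponentIn_compl_fastEscaping_subset_levelHole (L : ℕ) :
    connectedComponentIn (fastEscaping f R)ᶜ v ⊆ levelHole f R v L :=
  connectedComponentIn_mono v (compl_subset_compl.2 (levelSet_neg_subset_fastEscaping L))

lemma image_levelHole (hf : TranscEntire f) (hM : ∀ r ≥ R, r < maxMod f r)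
    (hweb : SpidersWeb (levelSet f R 0)) (hv : v ∉ fastEscaping f R) (L : ℕ) :
    f '' levelHole f R v (L + 1) = levelHole f R (f v) L := by
  have hfc := hf.1.continuous
  set Ω := levelHole f R v (L + 1)
  have hfΩ : f '' Ω ⊆ (levelSet f R (-L))ᶜ := by
    rintro _ ⟨u, hu, rfl⟩ hfu
    exact levelHole_subset_compl (L + 1) hu (apply_mem_levelSet_neg_iff.1 hfu)
  have hfr : frontier (f '' Ω) ⊆ levelSet f R (-L) := by
    refine (frontier_image_subset_image_frontier hfc hf.isOpenMap
      (isBounded_levelHole hM hweb _).isCompact_closure).trans ?_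
    rintro _ ⟨u, hu, rfl⟩
    exact apply_mem_levelSet_neg_iff.2 (frontier_levelHole_subset hfc _ hu)
  refine subset_antisymm ?_ ?_
  · exact ((isPreconnected_levelHole _).image f hfc.continuousOn).subset_connectedComponentIn
      (mem_image_of_mem f (mem_levelHole hv _)) hfΩ
  · exact (isPreconnected_levelHole L).subset_of_disjoint_frontier
      (hf.isOpenMap _ (isOpen_levelHole hfc _))
      ⟨f v, mem_levelHole (mapsTo_compl_fastEscaping hv) L, mem_image_of_mem f (mem_levelHole hv _)⟩
      (disjoint_compl_left.mono (levelHole_subset_compl L) hfr)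

lemma iterate_image_levelHole (hf : TranscEntire f) (hM : ∀ r ≥ R, r < maxMod f r)
    (hweb : SpidersWeb (levelSet f R 0)) (hv : v ∉ fastEscaping f R) (L t : ℕ) :
    f^[t] '' levelHole f R v (L + t) = levelHole f R (f^[t] v) L := by
  induction t generalizing v with
  | zero => simp
  | succ t ih =>
    rw [iterate_succ, image_comp, ← add_assoc, image_levelHole hf hM hweb hv,
      ih (mapsTo_compl_fastEscaping hv), comp_apply]

end LevelHoles

section Trapping

variable {f : ℂ → ℂ} {R : ℝ} {v : ℂ}

lemma closure_levelHole_zero_subset_image_closure (hf : TranscEntire f)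
    (hM : ∀ r ≥ R, r < maxMod f r) {G : Set ℂ} (hG : IsOpen G) (hGb : IsBounded G)
    (hGE : frontier G ⊆ levelSet f R 0) {z w : ℂ} (hzG : z ∈ G) {s : ℕ}
    (hz : ‖f^[s] z‖ < (maxMod f)^[s] R) (hw : w ∉ levelSet f R 0)
    (hws : ‖w‖ < (maxMod f)^[s] R) :
    closure (levelHole f R w 0) ⊆ f^[s] '' closure G := by
  have hfc := hf.1.continuous.iterate s
  have hfo := hf.isOpenMap.iterate s
  have hfr : frontier (f^[s] '' G) ⊆ levelSet f R 0 ∩ (ball 0 ((maxMod f)^[s] R))ᶜ :=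
    (frontier_image_subset_image_frontier hfc hfo hGb.isCompact_closure).trans
      ((image_mono hGE).trans (mapsTo_iterate_levelSet_zero hM s).image_subset)
  have hball : ball 0 ((maxMod f)^[s] R) ⊆ f^[s] '' G :=
    (convex_ball _ _).isPreconnected.subset_of_disjoint_frontier (hfo G hG)
      ⟨f^[s] z, mem_ball_zero_iff.2 hz, mem_image_of_mem _ hzG⟩
      (disjoint_compl_right.mono_right (hfr.trans inter_subset_right))
  have hhole : levelHole f R w 0 ⊆ f^[s] '' G :=
    (isPreconnected_levelHole 0).subset_of_disjoint_frontier (hfo G hG)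
      ⟨w, mem_connectedComponentIn (by simpa using hw), hball (mem_ball_zero_iff.2 hws)⟩
      (disjoint_compl_left.mono ((levelHole_subset_compl 0).trans (by simp))
        (hfr.trans inter_subset_left))
  rw [image_closure_of_isCompact hGb.isCompact_closure hfc.continuousOn]
  exact closure_mono hhole

lemma iInter_closure_levelHole_subset_compl (hf : TranscEntire f) (hR : 0 < R)
    (hM : ∀ r ≥ R, r < maxMod f r) (hweb : SpidersWeb (levelSet f R 0))
    (hv : v ∉ fastEscaping f R) : ⋂ L, closure (levelHole f R v L) ⊆ (fastEscaping f R)ᶜ := by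
  intro p hp hpA
  obtain ⟨ℓ, hpℓ⟩ := mem_iUnion.1 (fastEscaping_eq_iUnion_levelSet ▸ hpA)
  obtain ⟨G, hG, hGb, hGE, hvG⟩ := hweb.exists_isOpen_isBounded_mem v
  obtain ⟨ρ, hρ⟩ := hGb.closure.subset_closedBall 0
  obtain ⟨c, hc⟩ := exists_lt_iterate_maxMod hf.1.continuous hR hM ρ
  have hmono := strictMono_iterate_maxMod hM
  -- the lag `ℓ + c + 2` leaves room for `c + 1 + ℓ` more steps, up to time `t`,
  -- with `|f^t v|` still below `M^s(R, f)`
  obtain ⟨d, hd⟩ : ∃ d, ‖f^[d + (ℓ + c + 2)] v‖ < (maxMod f)^[d] R := by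
    simpa [mem_levelSet_neg_iff] using fun h => hv (levelSet_neg_subset_fastEscaping _ h)
  set s := d + (ℓ + c + 2)
  set t := c + 1 + ℓ + s
  have hvs : ‖f^[s] v‖ < (maxMod f)^[s] R := hd.trans_le (hmono.monotone (by omega))
  have hvt : ‖f^[t] v‖ < (maxMod f)^[s] R :=
    calc ‖f^[t] v‖ = ‖f^[c + 1 + ℓ] (f^[s] v)‖ := by rw [iterate_add_apply]
      _ ≤ (maxMod f)^[c + 1 + ℓ] ((maxMod f)^[d] R) :=
        norm_iterate_le_iterate_maxMod hf.1 hd.le _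
      _ = (maxMod f)^[c + 1 + ℓ + d] R := (iterate_add_apply _ _ _ _).symm
      _ < (maxMod f)^[s] R := hmono (by omega)
  have hvt_notMem : f^[t] v ∉ levelSet f R 0 := fun h =>
    mapsTo_compl_fastEscaping.iterate t hv (levelSet_neg_subset_fastEscaping 0 (by simpa using h))
  obtain ⟨u, hu, hup⟩ : f^[t] p ∈ f^[s] '' closure G := by
    refine closure_levelHole_zero_subset_image_closure hf hM hG hGb hGE hvG hvs hvt_notMem hvt ?_
    rw [← iterate_image_levelHole hf hM hweb hv 0 t, zero_add]
    exact image_closure_subset_closure_image (hf.1.continuous.iterate t)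
      (mem_image_of_mem _ (mem_iInter.1 hp t))
  have hupper : ‖f^[t] p‖ ≤ (maxMod f)^[s + c] R := by
    rw [← hup, iterate_add_apply (maxMod f)]
    exact norm_iterate_le_iterate_maxMod hf.1
      ((mem_closedBall_zero_iff.1 (hρ hu)).trans hc.le) s
  have hlower : (maxMod f)^[s + c + 1] R ≤ ‖f^[t] p‖ := by
    rw [show t = s + c + 1 + ℓ by omega]
    exact mem_levelSet_neg_iff.1 hpℓ (s + c + 1)
  have := hmono.le_iff_le.1 (hlower.trans hupper)
  omega

lemma exists_mem_iInter_closure_levelHole_apply_eq (hf : TranscEntire f)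
    (hM : ∀ r ≥ R, r < maxMod f r) (hweb : SpidersWeb (levelSet f R 0))
    (hv : v ∉ fastEscaping f R) {w : ℂ} (hw : ∀ L, w ∈ levelHole f R (f v) L) :
    ∃ z ∈ ⋂ L, closure (levelHole f R v L), f z = w := by
  set F : ℕ → Set ℂ := fun L => f ⁻¹' {w} ∩ closure (levelHole f R v L)
  have hF : ∀ L, IsCompact (F L) := fun L =>
    (isBounded_levelHole hM hweb L).isCompact_closure.inter_left
      (isClosed_singleton.preimage hf.1.continuous)
  have hFne : ∀ L, (F L).Nonempty := fun L => by
    obtain ⟨z, hz, hzw⟩ := (image_levelHole hf hM hweb hv L).symm ▸ hw L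
    exact ⟨z, hzw, subset_closure (levelHole_antitone hM L.le_succ hz)⟩
  obtain ⟨z, hz⟩ := IsCompact.nonempty_iInter_of_sequence_nonempty_isCompact_isClosed F
    (fun L => inter_subset_inter_right _ (closure_mono (levelHole_antitone hM L.le_succ)))
    hFne (hF 0) fun L => (hF L).isClosed
  exact ⟨z, mem_iInter.2 fun L => (mem_iInter.1 hz L).2, (mem_iInter.1 hz 0).1⟩

lemma isPreconnected_iInter_closure_levelHole (hM : ∀ r ≥ R, r < maxMod f r)
    (hweb : SpidersWeb (levelSet f R 0)) : IsPreconnected (⋂ L, closure (levelHole f R v L)) :=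
  isPreconnected_iInter_of_isCompact (fun _ _ h => closure_mono (levelHole_antitone hM h))
    (fun L => (isBounded_levelHole hM hweb L).isCompact_closure)
    fun L => (isPreconnected_levelHole L).closure

end Trapping

/-- the image of a component of `A(f)ᶜ` is a component of `A(f)ᶜ`. -/
theorem stmt_4 (f : ℂ → ℂ) (R : ℝ) (hf : TranscEntire f) (hR : 0 < R)
    (hM : ∀ r ≥ R, r < maxMod f r) (hweb : SpidersWeb (levelSet f R 0))
    (K : Set ℂ) (hK : IsCompOf K (fastEscaping f R)ᶜ) :
    IsCompOf (f '' K) (fastEscaping f R)ᶜ := by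
  obtain ⟨v, hv, rfl⟩ := hK
  refine ⟨f v, mapsTo_compl_fastEscaping hv, ?_⟩
  have hT : ⋂ L, closure (levelHole f R v L) ⊆ connectedComponentIn (fastEscaping f R)ᶜ v :=
    (isPreconnected_iInter_closure_levelHole hM hweb).subset_connectedComponentIn
      (mem_iInter.2 fun L => subset_closure (mem_levelHole hv L))
      (iInter_closure_levelHole_subset_compl hf hR hM hweb hv)
  refine ((hf.1.continuous.continuousOn.image_connectedComponentIn_subset hv).trans
    (connectedComponentIn_mono _ mapsTo_compl_fastEscaping.image_subset)).antisymm ?_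
  intro w hw
  obtain ⟨z, hzT, rfl⟩ := exists_mem_iInter_closure_levelHole_apply_eq hf hM hweb hv
    fun L => connectedComponentIn_compl_fastEscaping_subset_levelHole L hw
  exact mem_image_of_mem f (hT hzT)
end

section
/- Let (E_n)_{n≥0} be a sequence of nonempty compact subsets of ℂ and let f : ℂ → ℂ be a continuous function such that f(E_n) ⊇ E_{n+1} for all n ≥ 0. Then there exists ζ ∈ E_0 such that f^n(ζ) ∈ E_n for all n ≥ 0. -/
open Set Function

lemma chain (E : ℕ → Set ℂ) (f : ℂ → ℂ)
    (hcov : ∀ n, E (n + 1) ⊆ f '' E n) :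
    ∀ n, ∀ w ∈ E n, ∃ z, f^[n] z = w ∧ ∀ k ≤ n, f^[k] z ∈ E k := by
  intro n
  induction n with
  | zero => intro w hw; exact ⟨w, rfl, fun k hk => by simp [Nat.le_zero.mp hk, hw]⟩
  | succ n ih =>
    intro w hw
    obtain ⟨v, hv, hfv⟩ := hcov n hw
    obtain ⟨z, hz, hall⟩ := ih v hv
    refine ⟨z, ?_, ?_⟩
    · rw [Function.iterate_succ_apply', hz, hfv]
    · intro k hk
      rcases Nat.lt_or_ge k (n+1) with h | h
      · exact hall k (Nat.lt_succ_iff.mp h)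
      · have : k = n + 1 := le_antisymm hk h
        subst this
        rw [Function.iterate_succ_apply', hz, hfv]
        exact hw

/-- a point whose orbit tracks a sequence of compact sets each of which
covers the next. -/
theorem stmt_6 (E : ℕ → Set ℂ) (hne : ∀ n, (E n).Nonempty)
    (hcpt : ∀ n, IsCompact (E n)) (f : ℂ → ℂ) (hf : Continuous f)
    (hcov : ∀ n, E (n + 1) ⊆ f '' E n) :
    ∃ ζ ∈ E 0, ∀ n : ℕ, f^[n] ζ ∈ E n := by
  set K : ℕ → Set ℂ := fun n => ⋂ k, ⋂ _ : k ≤ n, f^[k] ⁻¹' E k with hK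
  have hclosed : ∀ n, IsClosed (K n) := fun n =>
    isClosed_iInter fun k => isClosed_iInter fun _ =>
      ((hcpt k).isClosed).preimage (hf.iterate k)
  have hmem : ∀ n z, z ∈ K n ↔ ∀ k ≤ n, f^[k] z ∈ E k := by
    intro n z; simp [hK]
  have hnonempty : ∀ n, (K n).Nonempty := by
    intro n
    obtain ⟨w, hw⟩ := hne n
    obtain ⟨z, _, hall⟩ := chain E f hcov n w hw
    exact ⟨z, (hmem n z).mpr hall⟩
  have hanti : ∀ n, K (n+1) ⊆ K n := by
    intro n z hz
    exact (hmem n z).mpr fun k hk => (hmem (n+1) z).mp hz k (hk.trans n.le_succ)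
  have hK0 : IsCompact (K 0) := by
    apply (hcpt 0).of_isClosed_subset (hclosed 0)
    intro z hz
    simpa using (hmem 0 z).mp hz 0 le_rfl
  obtain ⟨ζ, hζ⟩ := IsCompact.nonempty_iInter_of_sequence_nonempty_isCompact_isClosed
    K hanti hnonempty hK0 hclosed
  have : ∀ n, f^[n] ζ ∈ E n := fun n =>
    (hmem n ζ).mp (Set.mem_iInter.mp hζ n) n le_rfl
  exact ⟨ζ, by simpa using this 0, this⟩
end
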